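/- For a tree T of order m ≥ 2 and a cycle C of order n ≥ 3, dem(T □ C) = n if n ≥ 2m+1, and dem(T □ C) = 2m if n ≤ 2m. -/

import Mathlib

/-!
In `G □ H` (both connected), a vertex `(c, x)` monitors the copy `e.map (Prod.mk a)` of an edge `e`
of `H` if and only if `c = a` and `x` monitors `e` in `H`, and symmetrically for edges of `G`:
walks that leave the fibre `{a} × H` pay for it with a step in `G`, and shortest walks can be
routed so as to avoid any given edge of a fibre other than their own.

In a tree every vertex monitors every edge, since every edge is a bridge. In the cycle `C_n` a
vertex `x` monitors every edge lying on a shortest arc `x ⟶ x + l` with `2 l < n`, which misses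
only the edges around the antipode `x + n / 2`; so no single vertex monitors all of `C_n`, but `x`
and `x + n / 2` together do. Hence a distance-edge-monitoring set of `T □ C_n` meets every copy
`V × {j}` of `T` (at least `n` vertices) and has two vertices in every copy `{a} × C_n` (at least
`2 m` vertices), while any set meeting every copy of `T` and containing an antipodal pair in every
copy of `C_n` is one; such a set of size `max n (2 m)` exists.
-/

open SimpleGraph
open scoped Fin.CommRing Fin.NatCast

/-- A set `M` of vertices is a distance-edge-monitoring set of `G`. -/
def demSet {V : Type*} (G : SimpleGraph V) (M : Set V) : Prop :=
  ∀ e ∈ G.edgeSet, ∃ x ∈ M, ∃ y : V, G.dist x y ≠ (G.deleteEdges {e}).dist x y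

/-- The distance-edge-monitoring number of `G`. -/
noncomputable def dem {V : Type*} (G : SimpleGraph V) [Fintype V] : ℕ :=
  sInf {k | ∃ M : Finset V, M.card = k ∧ demSet G ↑M}

lemma Fin.val_one_of_two_le {n : ℕ} [NeZero n] (hn : 2 ≤ n) : (1 : Fin n).val = 1 := by
  rw [Fin.val_one', Nat.mod_eq_of_lt (by omega)]

namespace SimpleGraph

section Monitors

variable {V W : Type*} {G : SimpleGraph V} {x : V} {e : Sym2 V}

-- `demSet G M` unfolds to `∀ e ∈ G.edgeSet, ∃ x ∈ M, G.Monitors x e`.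
def Monitors (G : SimpleGraph V) (x : V) (e : Sym2 V) : Prop :=
  ∃ y, G.dist x y ≠ (G.deleteEdges {e}).dist x y

lemma monitors_iff : G.Monitors x e ↔
    ∃ y, G.Reachable x y ∧ ∀ p : (G.deleteEdges {e}).Walk x y, G.dist x y < p.length := by
  constructor
  · rintro ⟨y, hy⟩
    by_cases hr : (G.deleteEdges {e}).Reachable x y
    · have hle : G.dist x y ≤ (G.deleteEdges {e}).dist x y := hr.dist_anti (G.deleteEdges_le _)
      exact ⟨y, hr.mono (G.deleteEdges_le _),
        fun p => (lt_of_le_of_ne hle hy).trans_le (dist_le p)⟩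
    · rw [dist_eq_zero_of_not_reachable hr] at hy
      exact ⟨y, Reachable.of_dist_ne_zero hy, fun p => (hr ⟨p⟩).elim⟩
  · rintro ⟨y, hr, hlt⟩
    refine ⟨y, fun h => ?_⟩
    by_cases hr' : (G.deleteEdges {e}).Reachable x y
    · obtain ⟨p, hp⟩ := hr'.exists_walk_length_eq_dist
      exact (hlt p).ne (h.trans hp.symm)
    · rw [dist_eq_zero_of_not_reachable hr', hr.dist_eq_zero_iff] at h
      exact hr' (h ▸ Reachable.refl x)

lemma not_monitors_iff (hG : G.Preconnected) : ¬ G.Monitors x e ↔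
    ∀ y, ∃ p : (G.deleteEdges {e}).Walk x y, p.length ≤ G.dist x y := by
  simp [monitors_iff, hG x]

lemma monitors_of_isBridge (hG : G.Connected) (he : G.IsBridge e) (x : V) : G.Monitors x e := by
  induction e using Sym2.ind with | _ u v => ?_
  obtain ⟨y, hy⟩ : ∃ y, ¬ (G.deleteEdges {s(u, v)}).Reachable x y := by
    by_contra! h
    exact isBridge_iff.mp he ((h u).symm.trans (h v))
  exact monitors_iff.mpr ⟨y, hG x y, fun p => (hy ⟨p⟩).elim⟩

lemma Iso.dist_eq {G' : SimpleGraph W} (φ : G ≃g G') (x y : V) :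
    G'.dist (φ x) (φ y) = G.dist x y := by
  by_cases hr : G.Reachable x y
  · obtain ⟨p, hp⟩ := hr.exists_walk_length_eq_dist
    obtain ⟨q, hq⟩ :=
      (Iso.reachable_iff.mpr hr : G'.Reachable (φ x) (φ y)).exists_walk_length_eq_dist
    refine le_antisymm ((dist_le (p.map φ.toHom)).trans_eq (by simp [hp])) ?_
    simpa [hq] using
      dist_le ((q.map φ.symm.toHom).copy (φ.symm_apply_apply x) (φ.symm_apply_apply y))
  · rw [dist_eq_zero_of_not_reachable hr,
      dist_eq_zero_of_not_reachable (mt Iso.reachable_iff.mp hr)]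

def Iso.deleteEdges {G' : SimpleGraph W} (φ : G ≃g G') (e : Sym2 V) :
    G.deleteEdges {e} ≃g G'.deleteEdges {e.map φ} :=
  ⟨φ.toEquiv, fun {u v} => by
    have h := (Sym2.map.injective φ.injective).eq_iff (a := s(u, v)) (b := e)
    rw [Sym2.map_mk] at h
    simp [h, Iso.map_adj_iff]⟩

lemma Iso.monitors_iff {G' : SimpleGraph W} (φ : G ≃g G') :
    G'.Monitors (φ x) (e.map φ) ↔ G.Monitors x e := by
  have key : ∀ y, G'.dist (φ x) (φ y) ≠ (G'.deleteEdges {e.map φ}).dist (φ x) (φ y) ↔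
      G.dist x y ≠ (G.deleteEdges {e}).dist x y := fun y => by
    have h : (G'.deleteEdges {e.map φ}).dist (φ x) (φ y) = (G.deleteEdges {e}).dist x y :=
      (φ.deleteEdges e).dist_eq x y
    rw [φ.dist_eq, h]
  refine ⟨fun ⟨y, hy⟩ => ⟨φ.symm y, (key _).mp ?_⟩, fun ⟨y, hy⟩ => ⟨φ y, (key y).mpr hy⟩⟩
  rwa [φ.apply_symm_apply]

lemma Walk.apply_le_apply_add_length {f : V → ℕ} (hf : ∀ u v, G.Adj u v → f u ≤ f v + 1)
    {x y : V} (p : G.Walk x y) : f x ≤ f y + p.length := by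
  induction p with
  | nil => simp
  | cons h p ih => rw [Walk.length_cons]; linarith [hf _ _ h]

end Monitors

section BoxProd

variable {α β : Type*} {G : SimpleGraph α} {H : SimpleGraph β}

lemma dist_boxProd {x y : α × β} (h₁ : G.Reachable x.1 y.1) (h₂ : H.Reachable x.2 y.2) :
    (G □ H).dist x y = G.dist x.1 y.1 + H.dist x.2 y.2 := by
  have h := edist_boxProd (G := G) (H := H) x y
  rw [← (reachable_boxProd.mpr ⟨h₁, h₂⟩).coe_dist_eq_edist, ← h₁.coe_dist_eq_edist,
    ← h₂.coe_dist_eq_edist] at h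
  exact_mod_cast h

@[simp]
lemma Walk.length_boxProdLeft {a₁ a₂ : α} (p : G.Walk a₁ a₂) (b : β) :
    (p.boxProdLeft H b).length = p.length :=
  Walk.length_map _ _

@[simp]
lemma Walk.length_boxProdRight {b₁ b₂ : β} (p : H.Walk b₁ b₂) (a : α) :
    (p.boxProdRight G a).length = p.length :=
  Walk.length_map _ _

lemma Walk.edges_boxProdLeft {a₁ a₂ : α} (p : G.Walk a₁ a₂) (b : β) :
    (p.boxProdLeft H b).edges = p.edges.map (Sym2.map (·, b)) :=
  Walk.edges_map _ _

lemma Walk.edges_boxProdRight {b₁ b₂ : β} (p : H.Walk b₁ b₂) (a : α) :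
    (p.boxProdRight G a).edges = p.edges.map (Sym2.map (Prod.mk a)) :=
  Walk.edges_map _ _

lemma Walk.exists_boxProd_split : ∀ {x y : α × β} (p : (G □ H).Walk x y),
    ∃ (r : G.Walk x.1 y.1) (q : H.Walk x.2 y.2), r.length + q.length = p.length ∧
      (r.length = 0 → ∀ e ∈ q.edges, e.map (Prod.mk x.1) ∈ p.edges)
  | _, _, .nil => ⟨.nil, .nil, rfl, by simp⟩
  | x, _, .cons (v := v) h p => by
    obtain ⟨r, q, hlen, hrow⟩ := p.exists_boxProd_split
    rcases boxProd_adj.mp h with ⟨hG, h₂⟩ | ⟨hH, h₁⟩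
    · refine ⟨.cons hG r, q.copy h₂.symm rfl, by simp [← hlen]; omega, by simp⟩
    · refine ⟨r.copy h₁.symm rfl, .cons hH q, by simp [← hlen]; omega, fun h0 e he => ?_⟩
      rw [Walk.edges_cons, List.mem_cons] at he
      rcases he with rfl | he
      · rw [Sym2.map_mk, show (x.1, v.2) = v from Prod.ext h₁ rfl]
        exact List.mem_cons_self ..
      · simpa [h₁] using List.mem_cons_of_mem _ (hrow (by simpa using h0) e he)

lemma Monitors.boxProdRight {x : β} {e : Sym2 β} (h : H.Monitors x e) (a : α) :
    (G □ H).Monitors (a, x) (e.map (Prod.mk a)) := by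
  obtain ⟨y, hr, hlt⟩ := monitors_iff.mp h
  refine monitors_iff.mpr ⟨(a, y), reachable_boxProd.mpr ⟨.refl a, hr⟩, fun p => ?_⟩
  rw [dist_boxProd (Reachable.refl a) hr, dist_self, zero_add]
  dsimp only
  -- A walk that leaves the fibre `{a} × H` makes a step in `G`; one that stays in it is a walk
  -- of `H` avoiding `e`.
  obtain ⟨r, q, hlen, hrow⟩ := (p.mapLe (deleteEdges_le _)).exists_boxProd_split
  rw [Walk.length_mapLe] at hlen
  rcases Nat.eq_zero_or_pos r.length with h0 | hpos
  · have hq : ∀ f ∈ q.edges, f ∉ ({e} : Set (Sym2 β)) := by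
      rintro f hf rfl
      have := p.edges_subset_edgeSet (by simpa using hrow h0 f hf)
      simp [edgeSet_deleteEdges] at this
    have := hlt (q.toDeleteEdges {e} hq)
    simp only [Walk.length_transfer] at this
    omega
  · have : H.dist x y ≤ q.length := dist_le q
    omega

lemma notMem_edges_boxProdRight_append {c a : α} {x y₂ : β} {y₁ : α} {e : Sym2 β}
    (q : H.Walk x y₂) (r : G.Walk c y₁) (hq : c = a → e ∉ q.edges) :
    e.map (Prod.mk a) ∉ ((q.boxProdRight G c).append (r.boxProdLeft H y₂)).edges := by
  simp only [Walk.edges_append, Walk.edges_boxProdRight, Walk.edges_boxProdLeft,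
    List.mem_append, List.mem_map, not_or, not_exists, not_and]
  induction e using Sym2.ind with | _ u' v' => ?_
  refine ⟨fun g hg hge => ?_, fun g hg hge => ?_⟩ <;>
    induction g using Sym2.ind with | _ u v => ?_ <;>
    simp only [Sym2.map_mk, Sym2.eq_iff, Prod.mk.injEq] at hge
  · have : c = a ∧ s(u, v) = s(u', v') := by
      rcases hge with ⟨⟨rfl, rfl⟩, -, rfl⟩ | ⟨⟨rfl, rfl⟩, -, rfl⟩
      exacts [⟨rfl, rfl⟩, ⟨rfl, Sym2.eq_swap⟩]
    exact hq this.1 (this.2 ▸ hg)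
  · have huv := r.adj_of_mem_edges hg
    rcases hge with ⟨⟨rfl, -⟩, rfl, -⟩ | ⟨⟨rfl, -⟩, rfl, -⟩ <;> exact huv.ne rfl

lemma monitors_boxProd_right_iff (hG : G.Preconnected) (hH : H.Preconnected) {c a : α} {x : β}
    {e : Sym2 β} : (G □ H).Monitors (c, x) (e.map (Prod.mk a)) ↔ c = a ∧ H.Monitors x e := by
  refine ⟨fun hm => ?_, fun ⟨hca, h⟩ => hca ▸ h.boxProdRight c⟩
  by_contra hne
  refine (not_monitors_iff (hG.boxProd hH)).mpr (fun ⟨y₁, y₂⟩ => ?_) hm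
  -- Move inside `{c} × H` first, avoiding `e` when `c = a`, then inside `G × {y₂}`.
  obtain ⟨q, hq, hqe⟩ : ∃ q : H.Walk x y₂, q.length ≤ H.dist x y₂ ∧ (c = a → e ∉ q.edges) := by
    by_cases hca : c = a
    · obtain ⟨q, hq⟩ := (not_monitors_iff hH).mp (fun h => hne ⟨hca, h⟩) y₂
      refine ⟨q.mapLe (deleteEdges_le _), by simpa using hq, fun _ hmem => ?_⟩
      rw [Walk.edges_mapLe_eq_edges] at hmem
      simpa [edgeSet_deleteEdges] using q.edges_subset_edgeSet hmem
    · obtain ⟨q, hq⟩ := (hH x y₂).exists_walk_length_eq_dist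
      exact ⟨q, hq.le, fun h => (hca h).elim⟩
  obtain ⟨r, hr⟩ := (hG c y₁).exists_walk_length_eq_dist
  refine ⟨((q.boxProdRight G c).append (r.boxProdLeft H y₂)).toDeleteEdges _ fun f hf hfe =>
    notMem_edges_boxProdRight_append q r hqe (Set.mem_singleton_iff.mp hfe ▸ hf), ?_⟩
  rw [Walk.length_transfer, Walk.length_append, Walk.length_boxProdRight,
    Walk.length_boxProdLeft, dist_boxProd (hG _ _) (hH _ _)]
  dsimp only
  omega

lemma Monitors.boxProdLeft {x : α} {f : Sym2 α} (h : G.Monitors x f) (b : β) :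
    (G □ H).Monitors (x, b) (f.map (·, b)) := by
  simpa [Sym2.map_map, Function.comp_def] using
    (boxProdComm H G).monitors_iff.mpr (h.boxProdRight (G := H) b)

lemma monitors_boxProd_left_iff (hG : G.Preconnected) (hH : H.Preconnected) {c : α} {x b : β}
    {f : Sym2 α} : (G □ H).Monitors (c, x) (f.map (·, b)) ↔ x = b ∧ G.Monitors c f := by
  simpa [Sym2.map_map, Function.comp_def] using
    ((boxProdComm H G).monitors_iff (x := (x, c)) (e := f.map (Prod.mk b))).trans
      (monitors_boxProd_right_iff hH hG)

lemma mem_edgeSet_boxProd {e : Sym2 (α × β)} (he : e ∈ (G □ H).edgeSet) :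
    (∃ f ∈ G.edgeSet, ∃ b, e = f.map (·, b)) ∨ (∃ f ∈ H.edgeSet, ∃ a, e = f.map (Prod.mk a)) := by
  induction e using Sym2.ind with | _ x y => ?_
  obtain ⟨x₁, x₂⟩ := x
  obtain ⟨y₁, y₂⟩ := y
  simp only [mem_edgeSet, boxProd_adj] at he
  rcases he with ⟨h, rfl⟩ | ⟨h, rfl⟩
  exacts [.inl ⟨s(x₁, y₁), h, x₂, rfl⟩, .inr ⟨s(x₂, y₂), h, x₁, rfl⟩]

lemma demSet_boxProd {M : Set (α × β)}
    (hG : ∀ f ∈ G.edgeSet, ∀ b, ∃ x ∈ M, x.2 = b ∧ G.Monitors x.1 f)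
    (hH : ∀ f ∈ H.edgeSet, ∀ a, ∃ x ∈ M, x.1 = a ∧ H.Monitors x.2 f) :
    demSet (G □ H) M := by
  intro e he
  rcases mem_edgeSet_boxProd he with ⟨f, hf, b, rfl⟩ | ⟨f, hf, a, rfl⟩
  · obtain ⟨⟨c, x⟩, hx, rfl, hm⟩ := hG f hf b
    exact ⟨_, hx, hm.boxProdLeft x⟩
  · obtain ⟨⟨c, x⟩, hx, rfl, hm⟩ := hH f hf a
    exact ⟨_, hx, hm.boxProdRight c⟩

lemma card_le_card_of_demSet_boxProd [Fintype β] (hG : G.Preconnected) (hH : H.Preconnected)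
    {f : Sym2 α} (hf : f ∈ G.edgeSet) {M : Finset (α × β)} (hM : demSet (G □ H) ↑M) :
    Fintype.card β ≤ M.card := by
  classical
  have hcol : ∀ b, b ∈ M.image Prod.snd := fun b => by
    obtain ⟨⟨c, x⟩, hx, hm⟩ := hM _ ((G.boxProdLeft H b).toHom.map_mem_edgeSet hf)
    exact Finset.mem_image.mpr ⟨_, hx, ((monitors_boxProd_left_iff hG hH).mp hm).1⟩
  exact (Finset.card_le_card fun b _ => hcol b).trans Finset.card_image_le

lemma two_mul_card_le_card_of_demSet_boxProd [Fintype α] [Nonempty β] (hG : G.Preconnected)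
    (hH : H.Preconnected) (hH' : ∀ x, ∃ f ∈ H.edgeSet, ¬ H.Monitors x f)
    {M : Finset (α × β)} (hM : demSet (G □ H) ↑M) : 2 * Fintype.card α ≤ M.card := by
  classical
  have hrow : ∀ a, 2 ≤ (M.filter (·.1 = a)).card := by
    intro a
    have hmon : ∀ f ∈ H.edgeSet, ∃ x ∈ M, x.1 = a ∧ H.Monitors x.2 f := fun f hf => by
      obtain ⟨⟨c, x⟩, hx, hm⟩ := hM _ ((G.boxProdRight H a).toHom.map_mem_edgeSet hf)
      replace hm : (G □ H).Monitors (c, x) (f.map (Prod.mk a)) := hm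
      obtain ⟨rfl, hxf⟩ := (monitors_boxProd_right_iff hG hH).mp hm
      exact ⟨_, hx, rfl, hxf⟩
    obtain ⟨f₀, hf₀, -⟩ := hH' (Classical.arbitrary β)
    obtain ⟨x, hx, hxa, -⟩ := hmon f₀ hf₀
    obtain ⟨f₁, hf₁, hx₁⟩ := hH' x.2
    obtain ⟨y, hy, hya, hy₁⟩ := hmon f₁ hf₁
    exact Finset.one_lt_card.mpr
      ⟨x, by simp [hx, hxa], y, by simp [hy, hya], fun hxy => hx₁ (hxy ▸ hy₁)⟩
  calc 2 * Fintype.card α = ∑ _a : α, 2 := by simp [mul_comm]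
    _ ≤ ∑ a, (M.filter (·.1 = a)).card := Finset.sum_le_sum fun a _ => hrow a
    _ = M.card := (Finset.card_eq_sum_card_fiberwise (by simp)).symm

end BoxProd

section Cycle

variable {n : ℕ} [NeZero n]

lemma cycleGraph_adj_iff (hn : 3 ≤ n) {u v : Fin n} :
    (cycleGraph n).Adj u v ↔ v = u + 1 ∨ u = v + 1 := by
  have := Fin.val_one_of_two_le (n := n) (by omega)
  have := Fin.coe_int_sub_eq_ite u v
  have := Fin.coe_int_sub_eq_ite v u
  have := Fin.coe_int_add_eq_ite u 1
  have := Fin.coe_int_add_eq_ite v 1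
  simp only [cycleGraph_adj', Fin.ext_iff, Fin.le_iff_val_le_val] at *
  split_ifs at * <;> omega

lemma cycleGraph_edge_eq_iff (hn : 3 ≤ n) {a b : Fin n} : s(a, a + 1) = s(b, b + 1) ↔ a = b := by
  refine ⟨fun h => ?_, by rintro rfl; rfl⟩
  rcases Sym2.eq_iff.mp h with ⟨h, -⟩ | ⟨h₁, h₂⟩
  · exact h
  · have := Fin.val_one_of_two_le (n := n) (by omega)
    have := Fin.coe_int_add_eq_ite a 1
    have := Fin.coe_int_add_eq_ite b 1
    rw [Fin.ext_iff] at h₁ h₂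
    split_ifs at * <;> omega

lemma cycleGraph_exists_walk_deleteEdges (hn : 3 ≤ n) (x z : Fin n) {l : ℕ}
    (hl : l ≤ (z - x).val) :
    ∃ p : ((cycleGraph n).deleteEdges {s(z, z + 1)}).Walk x (x + l), p.length = l := by
  induction l with
  | zero => exact ⟨Walk.nil.copy rfl (by simp), by simp⟩
  | succ l ih =>
    obtain ⟨p, hp⟩ := ih (by omega)
    have hz : x + l ≠ z := by
      rintro rfl
      rw [add_sub_cancel_left, Fin.val_cast_of_lt (by omega)] at hl
      omega
    have hadj : ((cycleGraph n).deleteEdges {s(z, z + 1)}).Adj (x + l) (x + l + 1) := by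
      simp [(cycleGraph_adj_iff hn).mpr, cycleGraph_edge_eq_iff hn, hz]
    exact ⟨(p.concat hadj).copy rfl (by push_cast; ring), by simp [hp]⟩

lemma cycleGraph_deleteEdges_val_sub_le (hn : 3 ≤ n) {a u v : Fin n}
    (h : ((cycleGraph n).deleteEdges {s(a, a + 1)}).Adj u v) :
    (u - (a + 1)).val ≤ (v - (a + 1)).val + 1 := by
  have := Fin.val_one_of_two_le (n := n) (by omega)
  rw [deleteEdges_adj, cycleGraph_adj_iff hn, Set.mem_singleton_iff] at h
  obtain ⟨rfl | rfl, hne⟩ := h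
  · have hua : u ≠ a := by rintro rfl; exact hne rfl
    have := Fin.coe_int_add_eq_ite u 1
    have := Fin.coe_int_add_eq_ite a 1
    have := Fin.coe_int_sub_eq_ite u (a + 1)
    have := Fin.coe_int_sub_eq_ite (u + 1) (a + 1)
    rw [Ne, Fin.ext_iff] at hua
    simp only [Fin.le_iff_val_le_val] at *
    split_ifs at * <;> omega
  · have := Fin.coe_int_add_eq_ite v 1
    have := Fin.coe_int_add_eq_ite a 1
    have := Fin.coe_int_sub_eq_ite v (a + 1)
    have := Fin.coe_int_sub_eq_ite (v + 1) (a + 1)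
    simp only [Fin.le_iff_val_le_val] at *
    split_ifs at * <;> omega

lemma cycleGraph_min_val_sub_le (hn : 3 ≤ n) (x : Fin n) {u v : Fin n}
    (h : (cycleGraph n).Adj u v) :
    min (u - x).val (x - u).val ≤ min (v - x).val (x - v).val + 1 := by
  have := Fin.val_one_of_two_le (n := n) (by omega)
  have := Fin.coe_int_sub_eq_ite u x
  have := Fin.coe_int_sub_eq_ite x u
  have := Fin.coe_int_sub_eq_ite v x
  have := Fin.coe_int_sub_eq_ite x v
  rcases (cycleGraph_adj_iff hn).mp h with rfl | rfl
  · have := Fin.coe_int_add_eq_ite u 1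
    simp only [Fin.le_iff_val_le_val] at *
    split_ifs at * <;> omega
  · have := Fin.coe_int_add_eq_ite v 1
    simp only [Fin.le_iff_val_le_val] at *
    split_ifs at * <;> omega

lemma min_val_sub_le_cycleGraph_dist (hn : 3 ≤ n) (x y : Fin n) :
    min (y - x).val (x - y).val ≤ (cycleGraph n).dist x y := by
  obtain ⟨p, hp⟩ := (cycleGraph_preconnected y x).exists_walk_length_eq_dist
  have := p.apply_le_apply_add_length (fun u v h => cycleGraph_min_val_sub_le hn x h)
  simpa [dist_comm, hp] using this

lemma cycleGraph_monitors_arc_edge (hn : 3 ≤ n) (k : Fin n) {t l : ℕ} (htl : t < l)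
    (hl : 2 * l < n) :
    (cycleGraph n).Monitors k s(k + t, k + t + 1) ∧
      (cycleGraph n).Monitors (k + l) s(k + t, k + t + 1) := by
  have hd : (cycleGraph n).dist k (k + l) ≤ l := by
    obtain ⟨p, hp⟩ := cycleGraph_exists_walk_deleteEdges hn k (k + l) (l := l)
      (by rw [add_sub_cancel_left, Fin.val_cast_of_lt (by omega)])
    exact (dist_le (p.mapLe (deleteEdges_le _))).trans_eq ((Walk.length_mapLe _ _).trans hp)
  -- Cutting the cycle at the edge leaves a path, along which `· - (k + t + 1)` is a coordinate:
  -- a walk avoiding the edge between `k` and `k + l` has length at least `n - l > l`.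
  have hpot : ∀ {u v} (p : ((cycleGraph n).deleteEdges {s(k + t, k + t + 1)}).Walk u v),
      (u - (k + t + 1)).val ≤ (v - (k + t + 1)).val + p.length := fun p =>
    p.apply_le_apply_add_length fun _ _ h => cycleGraph_deleteEdges_val_sub_le hn h
  have hk : (k - (k + t + 1)).val = n - (t + 1) := by
    have : k - (k + t + 1) = ((n - (t + 1) : ℕ) : Fin n) := by
      rw [Nat.cast_sub (by omega), Fin.natCast_self]; push_cast; ring
    rw [this, Fin.val_cast_of_lt (by omega)]
  have hkl : (k + l - (k + t + 1)).val = l - (t + 1) := by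
    have : k + l - (k + t + 1) = ((l - (t + 1) : ℕ) : Fin n) := by
      rw [Nat.cast_sub (by omega)]; push_cast; ring
    rw [this, Fin.val_cast_of_lt (by omega)]
  have hreach : (cycleGraph n).Reachable k (k + l) := cycleGraph_preconnected _ _
  constructor
  · refine monitors_iff.mpr ⟨k + l, hreach, fun p => ?_⟩
    have := hpot p
    omega
  · refine monitors_iff.mpr ⟨k, hreach.symm, fun p => ?_⟩
    have := hpot p.reverse
    rw [Walk.length_reverse] at this
    rw [dist_comm]
    omega

lemma cycleGraph_not_monitors_antipodal_edge (hn : 3 ≤ n) (x : Fin n) :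
    ¬ (cycleGraph n).Monitors x s(x + (n / 2 : ℕ), x + (n / 2 : ℕ) + 1) := by
  rw [not_monitors_iff cycleGraph_preconnected]
  intro y
  set z := x + ((n / 2 : ℕ) : Fin n) with hz
  have hlow := min_val_sub_le_cycleGraph_dist hn x y
  have hh : ((n / 2 : ℕ) : Fin n).val = n / 2 := Fin.val_cast_of_lt (by omega)
  have := Fin.coe_int_sub_eq_ite y x
  have := Fin.coe_int_sub_eq_ite x y
  have := Fin.coe_int_sub_eq_ite z x
  have := Fin.coe_int_sub_eq_ite z y
  have := Fin.coe_int_add_eq_ite x ((n / 2 : ℕ) : Fin n)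
  rw [← hz] at *
  simp only [Fin.le_iff_val_le_val] at *
  -- The shorter of the two arcs between `x` and `y` does not pass the edge at the antipode.
  by_cases hs : (y - x).val ≤ n / 2
  · obtain ⟨p, hp⟩ := cycleGraph_exists_walk_deleteEdges hn x z (l := (y - x).val)
      (by split_ifs at * <;> omega)
    refine ⟨p.copy rfl (by rw [Fin.cast_val_eq_self]; ring), ?_⟩
    rw [Walk.length_copy, hp]
    split_ifs at * <;> omega
  · obtain ⟨p, hp⟩ := cycleGraph_exists_walk_deleteEdges hn y z (l := n - (y - x).val)
      (by split_ifs at * <;> omega)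
    have hend : y + ((n - (y - x).val : ℕ) : Fin n) = x := by
      rw [Nat.cast_sub (y - x).isLt.le, Fin.natCast_self, Fin.cast_val_eq_self]; ring
    refine ⟨(p.copy rfl hend).reverse, ?_⟩
    rw [Walk.length_reverse, Walk.length_copy, hp]
    split_ifs at * <;> omega

lemma cycleGraph_monitors_or_monitors (hn : 3 ≤ n) (c : Fin n) {e : Sym2 (Fin n)}
    (he : e ∈ (cycleGraph n).edgeSet) :
    (cycleGraph n).Monitors c e ∨ (cycleGraph n).Monitors (c + (n / 2 : ℕ)) e := by
  obtain ⟨j, rfl⟩ : ∃ j, e = s(j, j + 1) := by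
    induction e using Sym2.ind with | _ u v => ?_
    rw [mem_edgeSet, cycleGraph_adj_iff hn] at he
    rcases he with rfl | rfl
    exacts [⟨u, rfl⟩, ⟨v, Sym2.eq_swap⟩]
  obtain ⟨u, hun, rfl⟩ : ∃ u < n, j = c + u :=
    ⟨(j - c).val, (j - c).isLt, by rw [Fin.cast_val_eq_self]; ring⟩
  -- The edge lies on a short arc ending at `c`, unless it is one of the (at most two) edges at
  -- the antipode of `c`, which lie on a short arc ending at `c + n / 2`.
  rcases (by omega : 2 * (u + 1) < n ∨ 2 * (n - u) < n ∨ u = n / 2 ∨ u + 1 = n / 2)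
    with h | h | rfl | h
  · exact .inl (cycleGraph_monitors_arc_edge hn c (Nat.lt_succ_self u) h).1
  · have := (cycleGraph_monitors_arc_edge hn (c + u) (t := 0) (by omega) h).2
    rw [add_assoc, ← Nat.cast_add, Nat.add_sub_cancel' hun.le, Fin.natCast_self] at this
    simpa using Or.inl this
  · simpa using Or.inr
      (cycleGraph_monitors_arc_edge hn (c + (n / 2 : ℕ)) (t := 0) (l := 1) one_pos (by omega)).1
  · have := (cycleGraph_monitors_arc_edge hn (c + u) (t := 0) (l := 1) one_pos (by omega)).2
    rw [add_assoc, ← Nat.cast_add, h] at this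
    simpa using Or.inr this

end Cycle

section TreeCycle

variable {V : Type*} {T : SimpleGraph V} {n : ℕ} [NeZero n]

lemma demSet_boxProd_cycleGraph (hT : T.IsTree) (hn : 3 ≤ n) {M : Set (V × Fin n)}
    (hcol : ∀ j, ∃ x ∈ M, x.2 = j) (hrow : ∀ a, ∃ c, (a, c) ∈ M ∧ (a, c + (n / 2 : ℕ)) ∈ M) :
    demSet (T □ cycleGraph n) M := by
  refine demSet_boxProd (fun f hf j => ?_) (fun f hf a => ?_)
  · obtain ⟨x, hx, hxj⟩ := hcol j
    exact ⟨x, hx, hxj, monitors_of_isBridge hT.connected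
      (isAcyclic_iff_forall_isBridge.mp hT.isAcyclic hf) _⟩
  · obtain ⟨c, hc, hc'⟩ := hrow a
    rcases cycleGraph_monitors_or_monitors hn c hf with h | h
    exacts [⟨_, hc, rfl, h⟩, ⟨_, hc', rfl, h⟩]

lemma le_card_of_demSet_boxProd_cycleGraph [Fintype V] (hT : T.IsTree) (hn : 3 ≤ n)
    (hV : 2 ≤ Fintype.card V) {M : Finset (V × Fin n)} (hM : demSet (T □ cycleGraph n) ↑M) :
    max n (2 * Fintype.card V) ≤ M.card := by
  obtain ⟨a, b, hab⟩ : ∃ a b, T.Adj a b := by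
    obtain ⟨u, v, huv⟩ := Fintype.exists_pair_of_one_lt_card (by omega : 1 < Fintype.card V)
    obtain ⟨p⟩ := hT.connected u v
    cases p with
    | nil => exact absurd rfl huv
    | cons h _ => exact ⟨_, _, h⟩
  refine max_le ?_ ?_
  · simpa using card_le_card_of_demSet_boxProd hT.connected.preconnected
      cycleGraph_preconnected (T.mem_edgeSet.mpr hab) hM
  · exact two_mul_card_le_card_of_demSet_boxProd hT.connected.preconnected
      cycleGraph_preconnected
      (fun x => ⟨_, (cycleGraph_adj_iff hn).mpr (.inl rfl),
        cycleGraph_not_monitors_antipodal_edge hn x⟩) hM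

lemma exists_demSet_boxProd_cycleGraph_card_le_two_mul [Fintype V] (hT : T.IsTree) (hn : 3 ≤ n)
    (hnV : n ≤ 2 * Fintype.card V) :
    ∃ M : Finset (V × Fin n), M.card ≤ 2 * Fintype.card V ∧ demSet (T □ cycleGraph n) ↑M := by
  classical
  let e := Fintype.equivFin V
  -- The copy of `C_n` at `e.symm i` meets the copies of `T` at `i` and `i + n / 2`, and by `hnV`
  -- these cover all of them.
  let p : V → Fin n := fun a => ((e a : ℕ) : Fin n)
  refine ⟨.image (fun a => (a, p a)) .univ ∪ .image (fun a => (a, p a + (n / 2 : ℕ))) .univ,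
    ?_, demSet_boxProd_cycleGraph hT hn (fun j => ?_) (fun a => ⟨p a, by simp, by simp⟩)⟩
  · calc _ ≤ Fintype.card V + Fintype.card V := (Finset.card_union_le _ _).trans
          (add_le_add (Finset.card_image_le.trans_eq Finset.card_univ)
            (Finset.card_image_le.trans_eq Finset.card_univ))
      _ = _ := (two_mul _).symm
  · by_cases hj : j.val < Fintype.card V
    · exact ⟨(e.symm ⟨j, hj⟩, j), by simp [p], rfl⟩
    · refine ⟨(e.symm ⟨j - n / 2, by omega⟩, j), ?_, rfl⟩
      simp only [Finset.coe_union, Finset.coe_image, Finset.coe_univ, Set.image_univ,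
        Set.mem_union, Set.mem_range, Prod.mk.injEq]
      refine .inr ⟨_, rfl, ?_⟩
      simp only [p, Equiv.apply_symm_apply, ← Nat.cast_add,
        Nat.sub_add_cancel (by omega : n / 2 ≤ j.val), Fin.cast_val_eq_self]

lemma exists_demSet_boxProd_cycleGraph_card_le [Fintype V] [Nonempty V] (hT : T.IsTree)
    (hn : 3 ≤ n) (hnV : 2 * Fintype.card V < n) :
    ∃ M : Finset (V × Fin n), M.card ≤ n ∧ demSet (T □ cycleGraph n) ↑M := by
  classical
  let e := Fintype.equivFin V
  -- The copy of `T` at `j` is met in the copy of `C_n` at `e.symm (j % (n / 2))`; as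
  -- `Fintype.card V ≤ n / 2`, the copy of `C_n` at `e.symm i` is met at `i` and `i + n / 2`.
  let g : Fin n → V := fun j => e.symm ((j.val % (n / 2) : ℕ) : Fin (Fintype.card V))
  have hg : ∀ a (i : ℕ), i < n → i % (n / 2) = (e a).val → g i = a := fun a i hi h => by
    simp [g, Fin.val_cast_of_lt hi, h, e]
  refine ⟨.image (fun j => (g j, j)) .univ, Finset.card_image_le.trans (by simp),
    demSet_boxProd_cycleGraph hT hn (fun j => ⟨(g j, j), by simp, rfl⟩) (fun a => ?_)⟩
  have ha := (e a).isLt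
  simp only [Finset.coe_image, Finset.coe_univ, Set.image_univ, Set.mem_range, Prod.mk.injEq]
  refine ⟨(e a : ℕ), ⟨_, hg a _ (by omega) (Nat.mod_eq_of_lt (by omega)), rfl⟩,
    ⟨_, hg a ((e a : ℕ) + n / 2) (by omega) ?_, Nat.cast_add _ _⟩⟩
  rw [Nat.add_mod_right, Nat.mod_eq_of_lt (by omega)]

end TreeCycle

lemma dem_eq_of_forall_le_card {V : Type*} [Fintype V] {G : SimpleGraph V} {k : ℕ}
    (hup : ∃ M : Finset V, M.card ≤ k ∧ demSet G ↑M)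
    (hlow : ∀ M : Finset V, demSet G ↑M → k ≤ M.card) : dem G = k := by
  obtain ⟨M, hMk, hM⟩ := hup
  have hcard : M.card = k := le_antisymm hMk (hlow M hM)
  exact le_antisymm (Nat.sInf_le ⟨M, hcard, hM⟩)
    (le_csInf ⟨k, M, hcard, hM⟩ fun _ ⟨M', hM'k, hM'⟩ => hM'k ▸ hlow M' hM')

theorem dem_boxProd_cycleGraph {V : Type*} [Fintype V] {T : SimpleGraph V} {n : ℕ} [NeZero n]
    (hT : T.IsTree) (hn : 3 ≤ n) (hV : 2 ≤ Fintype.card V) :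
    dem (T □ cycleGraph n) = max n (2 * Fintype.card V) := by
  have : Nonempty V := Fintype.card_pos_iff.mp (by omega)
  refine dem_eq_of_forall_le_card ?_ fun _ hM => le_card_of_demSet_boxProd_cycleGraph hT hn hV hM
  rcases le_or_gt n (2 * Fintype.card V) with hnV | hnV
  · obtain ⟨M, hM, hdem⟩ := exists_demSet_boxProd_cycleGraph_card_le_two_mul hT hn hnV
    exact ⟨M, hM.trans (le_max_right _ _), hdem⟩
  · obtain ⟨M, hM, hdem⟩ := exists_demSet_boxProd_cycleGraph_card_le hT hn hnV
    exact ⟨M, hM.trans (le_max_left _ _), hdem⟩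

end SimpleGraph

theorem stmt_17 {V : Type*} [Fintype V] (T : SimpleGraph V) (hT : T.IsTree)
    (m n : ℕ) (hm : Fintype.card V = m) (hm2 : 2 ≤ m) (hn : 3 ≤ n) :
    (2 * m + 1 ≤ n → dem (T □ cycleGraph n) = n) ∧
    (n ≤ 2 * m → dem (T □ cycleGraph n) = 2 * m) := by
  have : NeZero n := ⟨by omega⟩
  subst hm
  rw [SimpleGraph.dem_boxProd_cycleGraph hT hn hm2]
  exact ⟨fun h => max_eq_left (by omega), max_eq_right⟩
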